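/- Let a ≥ 1, c > 0, and let d be a positive integer. Suppose Λ is a convex generator with Λ ≤_{P(a,1),B(c)} e_{1,1}^d, where e_{1,1}^d is the convex generator consisting of a single edge from (0,d) to (d,0) labeled 'e'. Then c ≥ min((3d−2+a)/d, (d+3)/2); moreover, if in addition c < (3d−2+a)/d, then Λ = e_{1,0}^{d(d+3)/2} (a single horizontal edge of multiplicity d(d+3)/2 labeled 'e'). -/

import Mathlib

open Real Set

noncomputable section

/-! ### Symplectic embeddings of subsets of ℝ⁴ ≅ ℂ² -/

/-- ℝ⁴ with coordinates `(x₁, y₁, x₂, y₂)`, identified with ℂ² via `z_j = x_j + i y_j`. -/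
abbrev R4 : Type := ℝ × ℝ × ℝ × ℝ

/-- The standard symplectic form `ω = dx₁∧dy₁ + dx₂∧dy₂` on ℝ⁴, as a bilinear pairing. -/
def omegaStd (v w : R4) : ℝ :=
  v.1 * w.2.1 - v.2.1 * w.1 + v.2.2.1 * w.2.2.2 - v.2.2.2 * w.2.2.1

/-- `X` symplectically embeds into `X'`: there is an injective smooth map `φ` defined on an
open neighborhood `U` of `X` with `φ(X) ⊆ X'`, whose derivative at every point preserves
the standard symplectic form. -/
def SymplecticEmbeds (X X' : Set R4) : Prop :=
  ∃ (U : Set R4) (φ : R4 → R4),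
    IsOpen U ∧ X ⊆ U ∧ ContDiffOn ℝ (⊤ : ℕ∞) φ U ∧ Set.InjOn φ U ∧ φ '' X ⊆ X' ∧
    ∀ p ∈ U, ∀ v w : R4,
      omegaStd (fderiv ℝ φ p v) (fderiv ℝ φ p w) = omegaStd v w

/-- The polydisk `P(a,b) = {z : π|z₁|² ≤ a, π|z₂|² ≤ b}`. -/
def polydisk (a b : ℝ) : Set R4 :=
  {z | π * (z.1 ^ 2 + z.2.1 ^ 2) ≤ a ∧ π * (z.2.2.1 ^ 2 + z.2.2.2 ^ 2) ≤ b}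

/-- The ellipsoid `E(a,b) = {z : π|z₁|²/a + π|z₂|²/b ≤ 1}`. -/
def ellipsoid (a b : ℝ) : Set R4 :=
  {z | π * (z.1 ^ 2 + z.2.1 ^ 2) / a + π * (z.2.2.1 ^ 2 + z.2.2.2 ^ 2) / b ≤ 1}

/-- The ball `B(c) = E(c,c)`. -/
def ball4 (c : ℝ) : Set R4 := ellipsoid c c

/-! ### Convex generators -/

/-- A convex generator, encoded as a commutative formal product of symbols `e_{a,b}` and
`h_{a,b}` over coprime pairs `(a,b)` of nonnegative integers.  `mult (a,b)` is the total
exponent of the direction `(a,b)`, so the corresponding edge of the underlying convex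
integral path has displacement vector `(mult (a,b) • a, - mult (a,b) • b)`, and
`hLabel (a,b) = true` iff the factor `h_{a,b}` occurs, i.e. iff this edge is labeled `h`.
No factor `h_{a,b}` may be repeated, and `h_{1,0}`, `h_{0,1}` may not occur (horizontal
and vertical edges can only be labeled `e`). -/
structure ConvexGenerator where
  mult : ℕ × ℕ → ℕ
  hLabel : ℕ × ℕ → Bool
  coprime_of_mem : ∀ d, mult d ≠ 0 → Nat.Coprime d.1 d.2
  finite_support : {d : ℕ × ℕ | mult d ≠ 0}.Finite
  mult_pos_of_h : ∀ d, hLabel d = true → mult d ≠ 0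
  h_ne_horiz : hLabel (1, 0) = false
  h_ne_vert : hLabel (0, 1) = false

namespace ConvexGenerator

/-- `x(Λ)`, the horizontal coordinate of the right endpoint of the path. -/
def xCoord (Λ : ConvexGenerator) : ℕ := ∑ᶠ d : ℕ × ℕ, Λ.mult d * d.1

/-- `y(Λ)`, the vertical coordinate of the left endpoint of the path. -/
def yCoord (Λ : ConvexGenerator) : ℕ := ∑ᶠ d : ℕ × ℕ, Λ.mult d * d.2

/-- `m(Λ)`, the number of lattice points on the path minus one (the total multiplicity). -/
def mTotal (Λ : ConvexGenerator) : ℕ := ∑ᶠ d : ℕ × ℕ, Λ.mult d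

/-- `h(Λ)`, the number of edges labeled `h`. -/
def hCount (Λ : ConvexGenerator) : ℕ := {d : ℕ × ℕ | Λ.hLabel d = true}.ncard

/-- The maximum of the linear functional `(p,q) ↦ b' p + a' q` over the path `Λ`:
the path starts at `(0, y(Λ))` and the maximum of the functional over the concave path
is obtained by adding all positive increments `m (b' a - a' b)` of its edges
(truncated subtraction implements the positive part). -/
def suppFn (Λ : ConvexGenerator) (a' b' : ℕ) : ℕ :=
  a' * Λ.yCoord + ∑ᶠ d : ℕ × ℕ, Λ.mult d * (b' * d.1 - a' * d.2)

/-- The set of lattice points in the closed region enclosed by the path `Λ` and the two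
coordinate axes (including lattice points on the boundary). -/
def latticeRegion (Λ : ConvexGenerator) : Set (ℕ × ℕ) :=
  {p | ∀ a' b' : ℕ, b' * p.1 + a' * p.2 ≤ Λ.suppFn a' b'}

/-- `L(Λ)`, the number of lattice points enclosed by `Λ` and the axes (boundary included). -/
def LCount (Λ : ConvexGenerator) : ℕ := Λ.latticeRegion.ncard

/-- The ECH index `I(Λ) = 2(L(Λ) - 1) - h(Λ)`. -/
def iIndex (Λ : ConvexGenerator) : ℤ := 2 * ((Λ.LCount : ℤ) - 1) - (Λ.hCount : ℤ)

/-- All edges of `Λ` are labeled `e`. -/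
def allE (Λ : ConvexGenerator) : Prop := ∀ d : ℕ × ℕ, Λ.hLabel d = false

/-- The exponent of the factor `e_{a,b}` in the formal product `Λ`. -/
def eExp (Λ : ConvexGenerator) (d : ℕ × ℕ) : ℕ :=
  Λ.mult d - (if Λ.hLabel d = true then 1 else 0)

/-- The symplectic action `A_Ω(Λ) = Σ_ν max_{p ∈ Ω} (ν⃗ × p)`: the edge in direction
`(a,b)` with multiplicity `m` has `ν⃗ = (m a, -m b)`, and `ν⃗ × p = m (b p₁ + a p₂)`. -/
def action (Λ : ConvexGenerator) (Ω : Set (ℝ × ℝ)) : ℝ :=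
  ∑ᶠ d : ℕ × ℕ, (Λ.mult d : ℝ) *
    sSup ((fun p : ℝ × ℝ => (d.2 : ℝ) * p.1 + (d.1 : ℝ) * p.2) '' Ω)

end ConvexGenerator

/-- `Λ₁` and `Λ₂` have no elliptic orbit in common: no factor `e_{a,b}` appears in both. -/
def NoCommonElliptic (Λ₁ Λ₂ : ConvexGenerator) : Prop :=
  ∀ d : ℕ × ℕ, Λ₁.eExp d = 0 ∨ Λ₂.eExp d = 0

/-- `Λ₁` and `Λ₂` have no hyperbolic orbit in common: no factor `h_{a,b}` appears in both. -/
def NoCommonHyperbolic (Λ₁ Λ₂ : ConvexGenerator) : Prop :=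
  ∀ d : ℕ × ℕ, ¬(Λ₁.hLabel d = true ∧ Λ₂.hLabel d = true)

/-- The generator `e_{a,b}^m`: a single edge in the coprime direction `(a,b)` with
multiplicity `m`, labeled `e`. -/
def eGen (a b : ℕ) (hab : Nat.Coprime a b) (m : ℕ) : ConvexGenerator where
  mult d := if d = (a, b) then m else 0
  hLabel _ := false
  coprime_of_mem := by
    intro d hd
    have hd' : d = (a, b) := by
      by_contra h
      simp [h] at hd
    subst hd'
    exact hab
  finite_support := by
    apply Set.Finite.subset (Set.finite_singleton (a, b))
    intro d hd
    simp only [Set.mem_setOf_eq] at hd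
    by_contra h
    simp only [Set.mem_singleton_iff] at h
    simp [h] at hd
  mult_pos_of_h := by intro d h; simp at h
  h_ne_horiz := rfl
  h_ne_vert := rfl

/-- `e_{1,0}^m`: a horizontal edge of multiplicity `m` labeled `e`. -/
def e10 (m : ℕ) : ConvexGenerator := eGen 1 0 (Nat.coprime_one_left 0) m

/-- `e_{0,1}^m`: a vertical edge of multiplicity `m` labeled `e`. -/
def e01 (m : ℕ) : ConvexGenerator := eGen 0 1 (Nat.coprime_one_right 0) m

/-- `e_{1,1}^m`: a single edge from `(0,m)` to `(m,0)` labeled `e`. -/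
def e11 (m : ℕ) : ConvexGenerator := eGen 1 1 (Nat.coprime_one_left 1) m

/-- `e_{b,1}^m`: a single edge with displacement vector `(m b, -m)` labeled `e`. -/
def eb1 (b m : ℕ) : ConvexGenerator := eGen b 1 (Nat.coprime_one_right b) m

/-- The product of two convex generators (concatenation of formal products; faithful to
the paper's product whenever the factors have no hyperbolic orbit in common). -/
def mulCG (Λ₁ Λ₂ : ConvexGenerator) : ConvexGenerator where
  mult d := Λ₁.mult d + Λ₂.mult d
  hLabel d := Λ₁.hLabel d || Λ₂.hLabel d
  coprime_of_mem := by
    intro d hd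
    have hd' : Λ₁.mult d + Λ₂.mult d ≠ 0 := hd
    rcases Nat.eq_zero_or_pos (Λ₁.mult d) with h1 | h1
    · exact Λ₂.coprime_of_mem d (by omega)
    · exact Λ₁.coprime_of_mem d (by omega)
  finite_support := by
    apply Set.Finite.subset (Λ₁.finite_support.union Λ₂.finite_support)
    intro d hd
    simp only [Set.mem_setOf_eq] at hd
    simp only [Set.mem_union, Set.mem_setOf_eq]
    omega
  mult_pos_of_h := by
    intro d h
    show Λ₁.mult d + Λ₂.mult d ≠ 0
    rcases Bool.or_eq_true_iff.mp h with h' | h'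
    · have := Λ₁.mult_pos_of_h d h'; omega
    · have := Λ₂.mult_pos_of_h d h'; omega
  h_ne_horiz := by rw [Bool.or_eq_false_iff]; exact ⟨Λ₁.h_ne_horiz, Λ₂.h_ne_horiz⟩
  h_ne_vert := by rw [Bool.or_eq_false_iff]; exact ⟨Λ₁.h_ne_vert, Λ₂.h_ne_vert⟩

/-- The product `∏_{i ∈ S} Λᵢ` of a family of convex generators (faithful to the paper's
product whenever the factors pairwise have no hyperbolic orbit in common). -/
def finProd {n : ℕ} (S : Finset (Fin n)) (Λs : Fin n → ConvexGenerator) : ConvexGenerator where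
  mult d := ∑ i ∈ S, (Λs i).mult d
  hLabel d := decide (∃ i ∈ S, (Λs i).hLabel d = true)
  coprime_of_mem := by
    intro d hd
    have : ∃ i ∈ S, (Λs i).mult d ≠ 0 := by
      by_contra hcon
      push_neg at hcon
      exact hd (Finset.sum_eq_zero hcon)
    obtain ⟨i, _, hi⟩ := this
    exact (Λs i).coprime_of_mem d hi
  finite_support := by
    apply Set.Finite.subset
      (Set.Finite.biUnion S.finite_toSet fun i _ => (Λs i).finite_support)
    intro d hd
    simp only [Set.mem_setOf_eq] at hd
    have : ∃ i ∈ S, (Λs i).mult d ≠ 0 := by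
      by_contra hcon
      push_neg at hcon
      exact hd (Finset.sum_eq_zero hcon)
    obtain ⟨i, hiS, hi⟩ := this
    exact Set.mem_biUnion hiS hi
  mult_pos_of_h := by
    intro d h
    obtain ⟨i, hiS, hi⟩ := of_decide_eq_true h
    intro hsum
    rw [Finset.sum_eq_zero_iff] at hsum
    exact (Λs i).mult_pos_of_h d hi (hsum i hiS)
  h_ne_horiz := by
    rw [decide_eq_false_iff_not]
    rintro ⟨i, -, hi⟩
    rw [(Λs i).h_ne_horiz] at hi
    exact Bool.false_ne_true hi
  h_ne_vert := by
    rw [decide_eq_false_iff_not]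
    rintro ⟨i, -, hi⟩
    rw [(Λs i).h_ne_vert] at hi
    exact Bool.false_ne_true hi

/-! ### Convex toric domains -/

/-- The moment-map region `Ω` of a convex toric domain:
`Ω = {(x,y) : 0 ≤ x ≤ A, 0 ≤ y ≤ f(x)}` with `f : [0,A] → ℝ≥0` nonincreasing concave. -/
structure ConvexToricDomain where
  A : ℝ
  A_pos : 0 < A
  f : ℝ → ℝ
  f_nonneg : ∀ x ∈ Set.Icc (0 : ℝ) A, 0 ≤ f x
  f_anti : AntitoneOn f (Set.Icc (0 : ℝ) A)
  f_concave : ConcaveOn ℝ (Set.Icc (0 : ℝ) A) f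

namespace ConvexToricDomain

/-- The region `Ω ⊆ ℝ²`. -/
def Omega (D : ConvexToricDomain) : Set (ℝ × ℝ) :=
  {p | 0 ≤ p.1 ∧ p.1 ≤ D.A ∧ 0 ≤ p.2 ∧ p.2 ≤ D.f p.1}

/-- The toric domain `X_Ω = {z ∈ ℂ² : (π|z₁|², π|z₂|²) ∈ Ω}` as a subset of ℝ⁴. -/
def toDomain (D : ConvexToricDomain) : Set R4 :=
  {z | (π * (z.1 ^ 2 + z.2.1 ^ 2), π * (z.2.2.1 ^ 2 + z.2.2.2 ^ 2)) ∈ D.Omega}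

end ConvexToricDomain

/-- The moment region of the polydisk `P(a,b)`: the rectangle `[0,a] × [0,b]`. -/
def rectOmega (a b : ℝ) : Set (ℝ × ℝ) :=
  {p | 0 ≤ p.1 ∧ p.1 ≤ a ∧ 0 ≤ p.2 ∧ p.2 ≤ b}

/-- The moment region of the ellipsoid `E(a,b)`: the triangle with vertices
`(0,0)`, `(a,0)`, `(0,b)`. -/
def triOmega (a b : ℝ) : Set (ℝ × ℝ) :=
  {p | 0 ≤ p.1 ∧ 0 ≤ p.2 ∧ p.1 / a + p.2 / b ≤ 1}

/-- `Λ ≤_{Ω,Ω'} Λ'` (Definition 1.16 of the paper, for `Λ'` with all edges `e`):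
(i) equal ECH indices, (ii) `A_Ω(Λ) ≤ A_{Ω'}(Λ')`, and
(iii) `x(Λ) + y(Λ) - h(Λ)/2 ≥ x(Λ') + y(Λ') + m(Λ') - 1`. -/
def genLE (Ω Ω' : Set (ℝ × ℝ)) (Λ Λ' : ConvexGenerator) : Prop :=
  Λ.iIndex = Λ'.iIndex ∧
  Λ.action Ω ≤ Λ'.action Ω' ∧
  ((Λ'.xCoord : ℝ) + (Λ'.yCoord : ℝ) + (Λ'.mTotal : ℝ) - 1 ≤
    (Λ.xCoord : ℝ) + (Λ.yCoord : ℝ) - (Λ.hCount : ℝ) / 2)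

/-- `Λ` is minimal for the convex toric domain with moment region `Ω`: all edges of `Λ`
are labeled `e`, and `Λ` uniquely minimizes the action among convex generators with the
same ECH index and all edges labeled `e`. -/
def IsMinimal (Ω : Set (ℝ × ℝ)) (Λ : ConvexGenerator) : Prop :=
  Λ.allE ∧ ∀ Λ' : ConvexGenerator, Λ'.allE → Λ'.iIndex = Λ.iIndex → Λ' ≠ Λ →
    Λ.action Ω < Λ'.action Ω

end

/-! ### Auxiliary lemmas -/

section Aux

open ConvexGenerator

lemma CG_ext {Λ₁ Λ₂ : ConvexGenerator} (h1 : Λ₁.mult = Λ₂.mult)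
    (h2 : Λ₁.hLabel = Λ₂.hLabel) : Λ₁ = Λ₂ := by
  cases Λ₁; cases Λ₂; simp only at h1 h2; subst h1; subst h2; rfl

lemma xCoord_eq_sum (Λ : ConvexGenerator) :
    Λ.xCoord = ∑ d ∈ Λ.finite_support.toFinset, Λ.mult d * d.1 := by
  apply finsum_eq_finset_sum_of_support_subset
  intro d hd
  simp only [Function.mem_support] at hd
  simp only [Finset.coe_sort_coe, Set.Finite.coe_toFinset, Set.mem_setOf_eq]
  intro h; simp [h] at hd

lemma yCoord_eq_sum (Λ : ConvexGenerator) :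
    Λ.yCoord = ∑ d ∈ Λ.finite_support.toFinset, Λ.mult d * d.2 := by
  apply finsum_eq_finset_sum_of_support_subset
  intro d hd
  simp only [Function.mem_support] at hd
  simp only [Finset.coe_sort_coe, Set.Finite.coe_toFinset, Set.mem_setOf_eq]
  intro h; simp [h] at hd

lemma sSup_rect (a : ℝ) (ha : 0 ≤ a) (d : ℕ × ℕ) :
    sSup ((fun p : ℝ × ℝ => (d.2 : ℝ) * p.1 + (d.1 : ℝ) * p.2) '' rectOmega a 1)
      = (d.2 : ℝ) * a + (d.1 : ℝ) := by
  apply IsGreatest.csSup_eq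
  constructor
  · exact ⟨(a, 1), ⟨ha, le_refl a, zero_le_one, le_refl 1⟩, by simp⟩
  · rintro x ⟨p, ⟨h1, h2, h3, h4⟩, rfl⟩
    have e1 : (d.2 : ℝ) * p.1 ≤ (d.2 : ℝ) * a :=
      mul_le_mul_of_nonneg_left h2 (Nat.cast_nonneg _)
    have e2 : (d.1 : ℝ) * p.2 ≤ (d.1 : ℝ) * 1 :=
      mul_le_mul_of_nonneg_left h4 (Nat.cast_nonneg _)
    simp only [mul_one] at e2
    dsimp only
    linarith

lemma action_rect (Λ : ConvexGenerator) (a : ℝ) (ha : 0 ≤ a) :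
    Λ.action (rectOmega a 1) = (Λ.xCoord : ℝ) + a * (Λ.yCoord : ℝ) := by
  have h1 : Λ.action (rectOmega a 1)
      = ∑ d ∈ Λ.finite_support.toFinset, (Λ.mult d : ℝ) * ((d.2 : ℝ) * a + (d.1 : ℝ)) := by
    unfold ConvexGenerator.action
    simp_rw [sSup_rect a ha]
    apply finsum_eq_finset_sum_of_support_subset
    intro d hd
    simp only [Function.mem_support] at hd
    simp only [Finset.coe_sort_coe, Set.Finite.coe_toFinset, Set.mem_setOf_eq]
    intro h; simp [h] at hd
  rw [h1, xCoord_eq_sum, yCoord_eq_sum]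
  push_cast
  rw [Finset.mul_sum, ← Finset.sum_add_distrib]
  exact Finset.sum_congr rfl fun d _ => by ring

lemma eGen_mult_apply (a b : ℕ) (hab : Nat.Coprime a b) (m : ℕ) (d : ℕ × ℕ) :
    (eGen a b hab m).mult d = if d = (a, b) then m else 0 := rfl

lemma xCoord_eGen (a b : ℕ) (hab : Nat.Coprime a b) (m : ℕ) :
    (eGen a b hab m).xCoord = m * a := by
  unfold ConvexGenerator.xCoord
  rw [finsum_eq_single _ (a, b) (fun x hx => by simp [eGen_mult_apply, hx])]
  simp [eGen_mult_apply]

lemma yCoord_eGen (a b : ℕ) (hab : Nat.Coprime a b) (m : ℕ) :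
    (eGen a b hab m).yCoord = m * b := by
  unfold ConvexGenerator.yCoord
  rw [finsum_eq_single _ (a, b) (fun x hx => by simp [eGen_mult_apply, hx])]
  simp [eGen_mult_apply]

lemma mTotal_eGen (a b : ℕ) (hab : Nat.Coprime a b) (m : ℕ) :
    (eGen a b hab m).mTotal = m := by
  unfold ConvexGenerator.mTotal
  rw [finsum_eq_single _ (a, b) (fun x hx => by simp [eGen_mult_apply, hx])]
  simp [eGen_mult_apply]

lemma hCount_eGen (a b : ℕ) (hab : Nat.Coprime a b) (m : ℕ) :
    (eGen a b hab m).hCount = 0 := by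
  unfold ConvexGenerator.hCount
  convert Set.ncard_empty (ℕ × ℕ)
  ext d
  simp [eGen]

lemma suppFn_eGen (a b : ℕ) (hab : Nat.Coprime a b) (m : ℕ) (a' b' : ℕ) :
    (eGen a b hab m).suppFn a' b' = a' * (m * b) + m * (b' * a - a' * b) := by
  unfold ConvexGenerator.suppFn
  rw [yCoord_eGen]
  rw [finsum_eq_single _ (a, b) (fun x hx => by simp [eGen_mult_apply, hx])]
  simp [eGen_mult_apply]

lemma action_e11_tri (c : ℝ) (hc : 0 < c) (d : ℕ) :
    (e11 d).action (triOmega c c) = (d : ℝ) * c := by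
  unfold ConvexGenerator.action
  rw [finsum_eq_single _ (1, 1) (fun x hx => by
    show ((if x = (1,1) then d else 0 : ℕ) : ℝ) * _ = 0
    rw [if_neg hx]; simp)]
  have hs : sSup ((fun p : ℝ × ℝ => ((1 : ℕ) : ℝ) * p.1 + ((1 : ℕ) : ℝ) * p.2) '' triOmega c c)
      = c := by
    apply IsGreatest.csSup_eq
    constructor
    · refine ⟨(c, 0), ⟨le_of_lt hc, le_refl 0, ?_⟩, by simp⟩
      rw [div_self hc.ne', zero_div]; norm_num
    · rintro x ⟨p, ⟨h1, h2, h3⟩, rfl⟩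
      rw [← add_div, div_le_one hc] at h3
      simpa using h3
  rw [hs]
  simp [e11, eGen_mult_apply]

lemma region_e11 (d : ℕ) :
    (e11 d).latticeRegion = {p : ℕ × ℕ | p.1 + p.2 ≤ d} := by
  ext p
  simp only [ConvexGenerator.latticeRegion, Set.mem_setOf_eq]
  have hs : ∀ a' b' : ℕ, (e11 d).suppFn a' b' = a' * d + d * (b' - a') := by
    intro a' b'; rw [e11, suppFn_eGen]; ring_nf
  constructor
  · intro h
    have := h 1 1
    rw [hs 1 1] at this
    omega
  · intro h a' b'
    rw [hs a' b']
    rcases le_total a' b' with hab | hab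
    · have e : a' + (b' - a') = b' := by omega
      calc b' * p.1 + a' * p.2 ≤ b' * p.1 + b' * p.2 :=
            Nat.add_le_add_left (Nat.mul_le_mul hab (le_refl _)) _
        _ = b' * (p.1 + p.2) := (Nat.mul_add _ _ _).symm
        _ ≤ b' * d := Nat.mul_le_mul (le_refl _) h
        _ = (a' + (b' - a')) * d := by rw [e]
        _ = a' * d + d * (b' - a') := by
            rw [Nat.add_mul, Nat.mul_comm d (b' - a')]
    · have e : b' - a' = 0 := by omega
      rw [e, Nat.mul_zero, Nat.add_zero]
      calc b' * p.1 + a' * p.2 ≤ a' * p.1 + a' * p.2 :=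
            Nat.add_le_add_right (Nat.mul_le_mul hab (le_refl _)) _
        _ = a' * (p.1 + p.2) := (Nat.mul_add _ _ _).symm
        _ ≤ a' * d := Nat.mul_le_mul (le_refl _) h

lemma LCount_e11 (d : ℕ) : (e11 d).LCount * 2 = (d + 1) * (d + 2) := by
  have hset : {p : ℕ × ℕ | p.1 + p.2 ≤ d}
      = ↑((Finset.range (d + 1)).biUnion (fun k => Finset.HasAntidiagonal.antidiagonal k)) := by
    ext p
    simp only [Set.mem_setOf_eq, Finset.coe_biUnion, Finset.coe_sort_coe, Set.mem_iUnion,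
      Finset.mem_coe, Finset.HasAntidiagonal.mem_antidiagonal, Finset.mem_range, Nat.lt_succ_iff]
    constructor
    · intro h; exact ⟨p.1 + p.2, h, rfl⟩
    · rintro ⟨k, hk, rfl⟩; exact hk
  rw [ConvexGenerator.LCount, region_e11, hset, Set.ncard_coe_finset]
  rw [Finset.card_biUnion]
  · simp only [Finset.Nat.card_antidiagonal]
    have hg : ∑ k ∈ Finset.range (d+1), (k+1) = (∑ k ∈ Finset.range (d+1), k) + (d+1) := by
      rw [Finset.sum_add_distrib, Finset.sum_const, Finset.card_range, smul_eq_mul, mul_one]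
    rw [hg, Nat.add_mul, Finset.sum_range_id_mul_two, Nat.add_sub_cancel]
    ring
  · intro x _ y _ hxy
    rw [Function.onFun, Finset.disjoint_left]
    intro p hp hq
    rw [Finset.HasAntidiagonal.mem_antidiagonal] at hp hq
    exact hxy (hp ▸ hq)

lemma iIndex_e11 (d : ℕ) : (e11 d).iIndex = (d : ℤ) * (d + 3) := by
  have h2 := LCount_e11 d
  rw [ConvexGenerator.iIndex, e11, hCount_eGen]
  have : ((e11 d).LCount : ℤ) * 2 = ((d : ℤ) + 1) * ((d : ℤ) + 2) := by
    exact_mod_cast h2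
  rw [show e11 d = eGen 1 1 (Nat.coprime_one_left 1) d from rfl] at this
  push_cast
  nlinarith [this]

lemma region_e10 (m : ℕ) :
    (e10 m).latticeRegion = {p : ℕ × ℕ | p.2 = 0 ∧ p.1 ≤ m} := by
  ext p
  simp only [ConvexGenerator.latticeRegion, Set.mem_setOf_eq]
  have hs : ∀ a' b' : ℕ, (e10 m).suppFn a' b' = m * b' := by
    intro a' b'; rw [e10, suppFn_eGen]; simp
  constructor
  · intro h
    have h1 := h 1 0
    have h2 := h 0 1
    rw [hs 1 0] at h1
    rw [hs 0 1] at h2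
    omega
  · rintro ⟨h0, h1⟩ a' b'
    rw [hs a' b', h0, Nat.mul_zero, Nat.add_zero, Nat.mul_comm m b']
    exact Nat.mul_le_mul (le_refl _) h1

lemma LCount_e10 (m : ℕ) : (e10 m).LCount = m + 1 := by
  have hset : {p : ℕ × ℕ | p.2 = 0 ∧ p.1 ≤ m}
      = ↑((Finset.range (m + 1)).image (fun i => ((i, 0) : ℕ × ℕ))) := by
    ext p
    simp only [Set.mem_setOf_eq, Finset.coe_image, Finset.coe_range, Set.mem_image,
      Set.mem_Iio, Nat.lt_succ_iff]
    constructor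
    · rintro ⟨h0, h1⟩
      exact ⟨p.1, h1, by rw [← h0]⟩
    · rintro ⟨i, hi, rfl⟩
      exact ⟨rfl, hi⟩
  rw [ConvexGenerator.LCount, region_e10, hset, Set.ncard_coe_finset,
    Finset.card_image_of_injective _ (fun i j hij => by simpa using hij), Finset.card_range]

lemma iIndex_e10 (m : ℕ) : (e10 m).iIndex = 2 * (m : ℤ) := by
  rw [ConvexGenerator.iIndex, LCount_e10, e10, hCount_eGen]
  push_cast
  ring

lemma eq_e10_of_yCoord_eq_zero (Λ : ConvexGenerator) (hy : Λ.yCoord = 0) :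
    Λ = e10 (Λ.mult (1, 0)) := by
  have hsupp : ∀ d, Λ.mult d ≠ 0 → d = (1, 0) := by
    intro d hd
    have hsum : ∑ d ∈ Λ.finite_support.toFinset, Λ.mult d * d.2 = 0 := by
      rw [← yCoord_eq_sum]; exact hy
    have hmem : d ∈ Λ.finite_support.toFinset := by
      simp only [Set.Finite.mem_toFinset, Set.mem_setOf_eq]; exact hd
    have h2 : Λ.mult d * d.2 = 0 := (Finset.sum_eq_zero_iff.mp hsum) d hmem
    have hd2 : d.2 = 0 := by
      rcases Nat.mul_eq_zero.mp h2 with h | h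
      · exact absurd h hd
      · exact h
    have hcop := Λ.coprime_of_mem d hd
    rw [hd2] at hcop
    have hd1 : d.1 = 1 := Nat.coprime_zero_right _ |>.mp hcop
    exact Prod.ext hd1 hd2
  have hh : ∀ d, Λ.hLabel d = false := by
    intro d
    by_contra h
    have ht : Λ.hLabel d = true := by simpa using h
    have hd10 := hsupp d (Λ.mult_pos_of_h d ht)
    rw [hd10, Λ.h_ne_horiz] at ht
    exact Bool.false_ne_true ht
  apply CG_ext
  · funext d
    show Λ.mult d = if d = (1, 0) then Λ.mult (1, 0) else 0
    split
    · next h => rw [h]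
    · next h =>
        by_contra hne
        exact h (hsupp d hne)
  · funext d
    exact hh d

end Aux

/-- **Step 1 of the proof of Lemma 2.2**: if `Λ ≤_{P(a,1),B(c)} e_{1,1}^d`, then
`c ≥ min ((3d-2+a)/d) ((d+3)/2)`; and if moreover `c < (3d-2+a)/d`, then
`Λ = e_{1,0}^{d(d+3)/2}`. -/
theorem le_e11_pow_d (a c : ℝ) (ha : 1 ≤ a) (hc : 0 < c) (d : ℕ) (hd : 0 < d)
    (Λ : ConvexGenerator)
    (hle : genLE (rectOmega a 1) (triOmega c c) Λ (e11 d)) :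
    min ((3 * (d : ℝ) - 2 + a) / (d : ℝ)) (((d : ℝ) + 3) / 2) ≤ c ∧
      (c < (3 * (d : ℝ) - 2 + a) / (d : ℝ) → Λ = e10 (d * (d + 3) / 2)) := by
  obtain ⟨hI, hA, hxy⟩ := hle
  have hdR : (0 : ℝ) < (d : ℝ) := by exact_mod_cast hd
  have he11x : (e11 d).xCoord = d := by rw [e11, xCoord_eGen, Nat.mul_one]
  have he11y : (e11 d).yCoord = d := by rw [e11, yCoord_eGen, Nat.mul_one]
  have he11m : (e11 d).mTotal = d := by rw [e11, mTotal_eGen]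
  rw [he11x, he11y, he11m] at hxy
  rw [action_e11_tri c hc d] at hA
  rw [action_rect Λ a (by linarith)] at hA
  by_cases hy : Λ.yCoord = 0
  · -- horizontal case
    have hΛ := eq_e10_of_yCoord_eq_zero Λ hy
    set m := Λ.mult (1, 0) with hm
    rw [hΛ, iIndex_e10, iIndex_e11] at hI
    -- hI : 2 * m = d * (d + 3) in ℤ
    have hm2 : m * 2 = d * (d + 3) := by exact_mod_cast by linarith [hI]
    have hx10 : (e10 m).xCoord = m := by rw [e10, xCoord_eGen, Nat.mul_one]
    have hy10 : (e10 m).yCoord = 0 := by rw [e10, yCoord_eGen, Nat.mul_zero]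
    rw [hΛ, hx10, hy10] at hA
    norm_num at hA
    -- hA : (m : ℝ) ≤ d * c
    have hmR : (m : ℝ) * 2 = (d : ℝ) * ((d : ℝ) + 3) := by exact_mod_cast hm2
    have hcge : ((d : ℝ) + 3) / 2 ≤ c := by
      rw [div_le_iff₀ (by norm_num : (0:ℝ) < 2)]
      have : (m : ℝ) ≤ (d : ℝ) * c := by linarith [hA]
      nlinarith
    refine ⟨le_trans (min_le_right _ _) hcge, fun _ => ?_⟩
    rw [hΛ]
    congr 1
    omega
  · -- y(Λ) ≥ 1 case
    have hy1 : 1 ≤ Λ.yCoord := Nat.one_le_iff_ne_zero.mpr hy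
    have hyR : (1 : ℝ) ≤ (Λ.yCoord : ℝ) := by exact_mod_cast hy1
    have hhR : (0 : ℝ) ≤ (Λ.hCount : ℝ) := Nat.cast_nonneg _
    have hxR : (0 : ℝ) ≤ (Λ.xCoord : ℝ) := Nat.cast_nonneg _
    have hb : 3 * (d : ℝ) - 2 + a ≤ (d : ℝ) * c := by
      nlinarith [mul_nonneg (by linarith : (0:ℝ) ≤ a - 1)
        (by linarith : (0:ℝ) ≤ (Λ.yCoord : ℝ) - 1)]
    have hcge : (3 * (d : ℝ) - 2 + a) / (d : ℝ) ≤ c := by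
      rw [div_le_iff₀ hdR]
      linarith [mul_comm c (d : ℝ)]
    exact ⟨le_trans (min_le_left _ _) hcge, fun hcon => absurd hcge (not_le.mpr hcon)⟩
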